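/- arXiv:2007.08575 — 9 statements merged into one kernel-verified Lean document; each statement's English description precedes it below -/
import Mathlib

section
/- For any natural number n ≥ 1 and ρ = 1 - 1/√2, the number of vectors v ∈ ℕ^{2n-1} satisfying: (i) ‖v‖₁ ≤ n; (ii) v₁ = 0 implies v₂ = ⋯ = v_{2n-1} = 0; (iii) for each i ∈ {1,…,n-2}, v_{2i} = v_{2i+1} = 0 implies v_{2i+2} = ⋯ = v_{2n-1} = 0; is at most C · n · (2+√2)^n for some absolute constant C. -/
/-!
A nonzero vector of `DNPvec n` has the shape `(a + 1, b₁, c₁, …, b_m, c_m, 0, 0, …)` with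
every pair `(bᵢ, cᵢ)` nonzero, so it is determined by `a < n` and a list of nonzero pairs of
total at most `n - 1`. Splitting off the first pair, whose sum `t` splits in `t + 1` ways,
the number of such lists of total at most `s` is at most `r s`, where
`r s = 1 + ∑_{u<s} (s + 1 - u) r u`. This recursion gives `r (s + 2) = 4 r (s + 1) - 2 r s`,
whose dominant root is `2 + √2 = 1 / (1 - 1/√2)`, so `r s ≤ (2 + √2)^s` and the count is at
most `1 + n (2 + √2)^(n-1)`.
-/

/-- Vectors `v ∈ ℕ^{2n-1}` (coordinates indexed `1,…,2n-1`, encoded as functions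
`ℕ → ℕ` vanishing outside `[1, 2n-1]`) satisfying:
(i) `‖v‖₁ ≤ n`;
(ii) `v₁ = 0` implies all coordinates vanish;
(iii) for each `i ∈ {1,…,n-2}`, `v_{2i} = v_{2i+1} = 0` implies
`v_j = 0` for all `j ≥ 2i+2`. -/
def DNPvec (n : ℕ) : Set (ℕ → ℕ) :=
  {v | (∀ j, j = 0 ∨ 2 * n - 1 < j → v j = 0) ∧
    (∑ j ∈ Finset.Icc 1 (2 * n - 1), v j) ≤ n ∧
    (v 1 = 0 → ∀ j, v j = 0) ∧
    (∀ i, 1 ≤ i → i ≤ n - 2 → v (2 * i) = 0 → v (2 * i + 1) = 0 →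
      ∀ j, 2 * i + 2 ≤ j → v j = 0)}

open Finset

def pairSum (L : List (ℕ × ℕ)) : ℕ := (L.map fun p => p.1 + p.2).sum

def flattenPairs : List (ℕ × ℕ) → ℕ → ℕ
  | [], _ => 0
  | p :: _, 0 => p.1
  | p :: _, 1 => p.2
  | _ :: L, j + 2 => flattenPairs L j

lemma sum_range_flattenPairs {L : List (ℕ × ℕ)} {N : ℕ} (h : L.length ≤ N) :
    ∑ j ∈ range (2 * N), flattenPairs L j = pairSum L := by
  induction L generalizing N with
  | nil => simp [flattenPairs, pairSum]
  | cons p L ih =>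
    obtain ⟨N, rfl⟩ : ∃ M, N = M + 1 := ⟨N - 1, by rw [List.length_cons] at h; omega⟩
    rw [show 2 * (N + 1) = 2 * N + 1 + 1 by ring, sum_range_succ', sum_range_succ']
    simp only [flattenPairs, ih (Nat.le_of_succ_le_succ h)]
    simp only [pairSum, List.map_cons, List.sum_cons]
    ring

lemma exists_flattenPairs_eq (N : ℕ) {w : ℕ → ℕ} (hsupp : ∀ j, 2 * N ≤ j → w j = 0)
    (htail : ∀ i j, w (2 * i) = 0 → w (2 * i + 1) = 0 → 2 * i ≤ j → w j = 0) :
    ∃ L : List (ℕ × ℕ), L.length ≤ N ∧ (∀ p ∈ L, p ≠ 0) ∧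
      flattenPairs L = w := by
  induction N generalizing w with
  | zero => exact ⟨[], le_rfl, by simp, funext fun j => (hsupp j (by omega)).symm⟩
  | succ N ih =>
    by_cases h0 : w 0 = 0 ∧ w 1 = 0
    · exact ⟨[], by simp, by simp, funext fun j => (htail 0 j h0.1 h0.2 (by omega)).symm⟩
    obtain ⟨L, hlen, hne, hL⟩ := ih (w := fun j => w (j + 2)) (fun j hj => hsupp _ (by omega))
      fun i j h1 h2 hij => htail (i + 1) (j + 2) h1 h2 (by omega)
    refine ⟨(w 0, w 1) :: L, by simpa using hlen, ?_, ?_⟩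
    · exact List.forall_mem_cons.2 ⟨fun h => h0 (Prod.ext_iff.1 h), hne⟩
    · funext j
      rcases j with _ | _ | j <;> simp [flattenPairs, hL]

def goodPairLists (s : ℕ) : Finset (List (ℕ × ℕ)) :=
  insert [] (univ.biUnion fun u : Fin s =>
    (antidiagonal (s - u)).biUnion fun p => (goodPairLists u).image (p :: ·))

lemma mem_goodPairLists {L : List (ℕ × ℕ)} {s : ℕ} (hL : ∀ p ∈ L, p ≠ 0)
    (hsum : pairSum L ≤ s) : L ∈ goodPairLists s := by
  induction L generalizing s with
  | nil => rw [goodPairLists]; exact mem_insert_self _ _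
  | cons p L ih =>
    simp only [List.mem_cons, forall_eq_or_imp] at hL
    have hp : p.1 + p.2 ≠ 0 := by simpa [Prod.ext_iff] using hL.1
    simp only [pairSum, List.map_cons, List.sum_cons] at hsum
    rw [goodPairLists]
    refine mem_insert_of_mem (mem_biUnion.2 ⟨⟨s - (p.1 + p.2), by omega⟩, mem_univ _, ?_⟩)
    refine mem_biUnion.2 ⟨p, mem_antidiagonal.2 (by dsimp only; omega), ?_⟩
    exact mem_image_of_mem _ (ih hL.2 (by simp only [pairSum]; omega))

def pairCount (s : ℕ) : ℕ := 1 + ∑ u : Fin s, (s + 1 - u) * pairCount u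

lemma card_goodPairLists_le (s : ℕ) : #(goodPairLists s) ≤ pairCount s := by
  induction s using Nat.strong_induction_on with
  | _ s ih =>
  rw [goodPairLists, pairCount, add_comm 1]
  refine (card_insert_le _ _).trans (Nat.add_le_add_right ?_ 1)
  refine card_biUnion_le.trans (sum_le_sum fun u _ => card_biUnion_le.trans ?_)
  calc ∑ p ∈ antidiagonal (s - u), #((goodPairLists u).image (p :: ·))
      ≤ ∑ p ∈ antidiagonal (s - u), pairCount u :=
        sum_le_sum fun p _ => card_image_le.trans (ih u u.2)
    _ = (s + 1 - u) * pairCount u := by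
        rw [sum_const, Nat.card_antidiagonal, smul_eq_mul]
        congr 1
        omega

lemma pairCount_zero : pairCount 0 = 1 := by
  rw [pairCount, univ_eq_empty, sum_empty, add_zero]

lemma pairCount_eq_sum_range (s : ℕ) :
    pairCount s = 1 + ∑ u ∈ range s, (s + 1 - u) * pairCount u := by
  rw [pairCount, Fin.sum_univ_eq_sum_range (fun u => (s + 1 - u) * pairCount u)]

lemma pairCount_succ (s : ℕ) :
    pairCount (s + 1) = 3 * pairCount s + ∑ u ∈ range s, pairCount u := by
  have hs := pairCount_eq_sum_range s
  rw [pairCount_eq_sum_range, sum_range_succ,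
    sum_congr rfl fun u hu => show (s + 1 + 1 - u) * pairCount u
      = (s + 1 - u) * pairCount u + pairCount u by
        rw [show s + 1 + 1 - u = s + 1 - u + 1 by simp at hu; omega]; ring,
    sum_add_distrib, show s + 1 + 1 - s = 2 by omega]
  omega

lemma pairCount_add_two (s : ℕ) :
    pairCount (s + 2) + 2 * pairCount s = 4 * pairCount (s + 1) := by
  have h1 : pairCount (s + 2) = _ := pairCount_succ (s + 1)
  have h2 := pairCount_succ s
  rw [sum_range_succ] at h1
  omega

lemma pairCount_succ_le (s : ℕ) :
    (pairCount (s + 1) : ℝ) ≤ (2 + √2) * pairCount s := by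
  have hsq : √2 ^ 2 = 2 := Real.sq_sqrt zero_le_two
  induction s with
  | zero =>
    have h1 : pairCount 1 = 3 := by rw [pairCount_succ, pairCount_zero, sum_range_zero]; rfl
    rw [h1, pairCount_zero, Nat.cast_one, mul_one, Nat.cast_ofNat]
    nlinarith [Real.sqrt_nonneg 2]
  | succ s ih =>
    have hlt : √2 < 2 := by nlinarith [Real.sqrt_nonneg 2]
    have hrec : (pairCount (s + 2) : ℝ) + 2 * pairCount s = 4 * pairCount (s + 1) := by
      exact_mod_cast pairCount_add_two s
    -- `2 + √2` is the larger root of `x² = 4x - 2`, and `(2 - √2)(2 + √2) = 2`.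
    have key : (2 + √2) * pairCount (s + 1) - pairCount (s + 2)
        = (2 - √2) * ((2 + √2) * pairCount s - pairCount (s + 1)) := by
      linear_combination (-1 : ℝ) * hrec + (pairCount s : ℝ) * hsq
    nlinarith [mul_nonneg (sub_nonneg.2 hlt.le) (sub_nonneg.2 ih)]

lemma pairCount_le_pow (s : ℕ) : (pairCount s : ℝ) ≤ (2 + √2) ^ s := by
  induction s with
  | zero => simp [pairCount_zero]
  | succ s ih =>
    calc (pairCount (s + 1) : ℝ) ≤ (2 + √2) * pairCount s := pairCount_succ_le s
      _ ≤ (2 + √2) * (2 + √2) ^ s := by gcongr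
      _ = (2 + √2) ^ (s + 1) := (pow_succ' _ _).symm

def vecOfPairs (a : ℕ) (L : List (ℕ × ℕ)) : ℕ → ℕ
  | 0 => 0
  | 1 => a + 1
  | j + 2 => flattenPairs L j

lemma sum_Icc_vecOfPairs {a N : ℕ} {L : List (ℕ × ℕ)} (h : L.length ≤ N) :
    ∑ j ∈ Icc 1 (2 * N + 1), vecOfPairs a L j = a + 1 + pairSum L := by
  have hsplit := sum_eq_sum_Ico_succ_bot (by omega : 0 < 2 * N + 1 + 1) (vecOfPairs a L)
  rw [← range_eq_Ico, zero_add, Ico_add_one_right_eq_Icc, sum_range_succ', sum_range_succ']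
    at hsplit
  simp only [vecOfPairs, sum_range_flattenPairs h] at hsplit ⊢
  omega

lemma DNPvec_eq_zero_of_pair_eq_zero {n : ℕ} {v : ℕ → ℕ} (hv : v ∈ DNPvec n) {i j : ℕ}
    (h0 : v (2 * i + 2) = 0) (h1 : v (2 * i + 3) = 0) (hij : 2 * i + 2 ≤ j) : v j = 0 := by
  obtain ⟨hsupp, -, -, htail⟩ := hv
  rcases Nat.lt_or_ge j (2 * i + 4) with hj | hj
  · rcases (by omega : j = 2 * i + 2 ∨ j = 2 * i + 3) with rfl | rfl
    exacts [h0, h1]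
  rcases Nat.lt_or_ge (i + 1) (n - 1) with hi | hi
  · exact htail (i + 1) (by omega) (by omega) h0 h1 _ (by omega)
  · exact hsupp _ (by omega)

lemma one_le_of_mem_DNPvec {n : ℕ} {v : ℕ → ℕ} (hv : v ∈ DNPvec n) (hv1 : v 1 ≠ 0) :
    1 ≤ n := by
  by_contra h
  exact hv1 (hv.1 1 (by omega))

lemma exists_vecOfPairs_eq {n : ℕ} {v : ℕ → ℕ} (hv : v ∈ DNPvec n) (hv1 : v 1 ≠ 0) :
    ∃ L : List (ℕ × ℕ), L.length ≤ n - 1 ∧ (∀ p ∈ L, p ≠ 0) ∧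
      vecOfPairs (v 1 - 1) L = v := by
  have hn := one_le_of_mem_DNPvec hv hv1
  obtain ⟨L, hlen, hne, hL⟩ := exists_flattenPairs_eq (n - 1) (w := fun j => v (j + 2))
    (fun j hj => hv.1 _ (by omega))
    fun i j h0 h1 hij => DNPvec_eq_zero_of_pair_eq_zero hv h0 h1 (by omega)
  refine ⟨L, hlen, hne, funext fun j => ?_⟩
  rcases j with _ | _ | j
  · exact (hv.1 0 (Or.inl rfl)).symm
  · show v 1 - 1 + 1 = v 1
    omega
  · exact congrFun hL j

lemma DNPvec_subset_vecOfPairs_image (n : ℕ) :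
    DNPvec n ⊆ insert 0
      (Function.uncurry vecOfPairs '' (range n ×ˢ goodPairLists (n - 1) : Finset _)) := by
  intro v hv
  by_cases hv1 : v 1 = 0
  · exact Or.inl (funext (hv.2.2.1 hv1))
  have hn := one_le_of_mem_DNPvec hv hv1
  obtain ⟨L, hlen, hne, hL⟩ := exists_vecOfPairs_eq hv hv1
  have hsum := hv.2.1
  rw [← hL, show 2 * n - 1 = 2 * (n - 1) + 1 by omega, sum_Icc_vecOfPairs hlen] at hsum
  have hL_sum : pairSum L ≤ n - 1 := by omega
  exact Or.inr ⟨(v 1 - 1, L),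
    mem_coe.2 (mem_product.2 ⟨mem_range.2 (by omega), mem_goodPairLists hne hL_sum⟩), hL⟩

lemma ncard_DNPvec_le (n : ℕ) : (DNPvec n).ncard ≤ 1 + n * pairCount (n - 1) := by
  set S := range n ×ˢ goodPairLists (n - 1)
  calc (DNPvec n).ncard
      ≤ (insert 0 (Function.uncurry vecOfPairs '' (S : Set _))).ncard :=
        Set.ncard_le_ncard (DNPvec_subset_vecOfPairs_image n) ((S.finite_toSet.image _).insert 0)
    _ ≤ (Function.uncurry vecOfPairs '' (S : Set _)).ncard + 1 := Set.ncard_insert_le _ _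
    _ ≤ #S + 1 := by
        rw [← Set.ncard_coe_finset S]
        exact Nat.add_le_add_right (Set.ncard_image_le S.finite_toSet) 1
    _ ≤ 1 + n * pairCount (n - 1) := by
        rw [card_product, card_range, add_comm]
        exact Nat.add_le_add_left (Nat.mul_le_mul_left n (card_goodPairLists_le _)) 1

/-- The number of such vectors is at most `C · n · (2+√2)^n` for an absolute
constant `C`. -/
theorem stmt2 :
    ∃ C : ℝ, ∀ n : ℕ, 1 ≤ n →
      ((DNPvec n).ncard : ℝ) ≤ C * n * (2 + Real.sqrt 2) ^ n := by
  refine ⟨2, fun n hn => ?_⟩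
  have hq : 1 ≤ 2 + √2 := by linarith [Real.sqrt_nonneg 2]
  have hn' : (1 : ℝ) ≤ n := by exact_mod_cast hn
  have hpow : (1 : ℝ) ≤ (2 + √2) ^ (n - 1) := one_le_pow₀ hq
  calc ((DNPvec n).ncard : ℝ) ≤ 1 + n * pairCount (n - 1) := by exact_mod_cast ncard_DNPvec_le n
    _ ≤ n * (2 + √2) ^ (n - 1) + n * (2 + √2) ^ (n - 1) := by
        gcongr
        · nlinarith
        · exact pairCount_le_pow _
    _ ≤ 2 * n * (2 + √2) ^ n := by
        have := pow_le_pow_right₀ hq (Nat.sub_le n 1)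
        nlinarith
end

section
/- Fix n ≥ 1 and t ∈ {1,…,n-1}. The number of vectors v ∈ ℕ^{2n-1} satisfying conditions (i)–(iii) below and additionally having t(v) = t (where t(v) is the largest t' ∈ {1,…,n-1} with v_{2t'} + v_{2t'+1} > 0) is at most (2+√2)^n. Conditions: (i) ‖v‖₁ ≤ n; (ii) v₁ = 0 implies all other coordinates are 0; (iii) for each i, v_{2i} = v_{2i+1} = 0 implies v_j = 0 for all j > 2i+1. -/
open Finset

theorem Set.finite_and_ncard_le_sum_of_subset_biUnion_image {ι α β : Type*} {S : Set β}
    {P : Finset ι} {f : ι → α → β} {T : ι → Set α} (hT : ∀ i ∈ P, (T i).Finite)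
    (hS : S ⊆ ⋃ i ∈ P, f i '' T i) : S.Finite ∧ S.ncard ≤ ∑ i ∈ P, (T i).ncard := by
  have hU : (⋃ i ∈ P, f i '' T i).Finite :=
    P.finite_toSet.biUnion fun i hi => (hT i hi).image _
  refine ⟨hU.subset hS, (Set.ncard_le_ncard hS hU).trans ((P.set_ncard_biUnion_le _).trans ?_)⟩
  exact sum_le_sum fun i hi => Set.ncard_image_le (hT i hi)

theorem inv_one_sub_inv_two_add_sqrt_two : (1 - (2 + √2)⁻¹)⁻¹ = √2 := by
  have h2 : √2 * √2 = 2 := Real.mul_self_sqrt zero_le_two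
  have hpos : 0 < √2 := by positivity
  field_simp
  rw [div_eq_iff (by linarith)]
  nlinarith

theorem sum_erase_zero_inv_two_add_sqrt_two_pow_le_one (N : ℕ) :
    ∑ p ∈ (range (N + 1) ×ˢ range (N + 1)).erase (0, 0), (2 + √2)⁻¹ ^ (p.1 + p.2) ≤ 1 := by
  set r := (2 + √2)⁻¹ with hr
  have hr0 : 0 < r := by positivity
  have hr1 : r < 1 := inv_lt_one_of_one_lt₀ (by linarith [Real.sqrt_nonneg 2])
  have hgeom : ∑ k ∈ range (N + 1), r ^ k ≤ √2 := by
    simpa only [range_eq_Ico, pow_zero, one_div, hr, inv_one_sub_inv_two_add_sqrt_two]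
      using geom_sum_Ico_le_of_lt_one hr0.le hr1 (m := 0) (n := N + 1)
  have hsq := mul_self_le_mul_self (sum_nonneg fun k _ => pow_nonneg hr0.le k) hgeom
  rw [Real.mul_self_sqrt zero_le_two] at hsq
  rw [sum_erase_eq_sub (by simp), sum_product]
  simp only [pow_add, ← mul_sum, ← sum_mul]
  linarith

theorem sum_Icc_one_two_mul_succ_add_one {M : Type*} [AddCommMonoid M] (v : ℕ → M) (t : ℕ) :
    ∑ j ∈ Icc 1 (2 * (t + 1) + 1), v j =
      ∑ j ∈ Icc 1 (2 * t + 1), v j + v (2 * t + 2) + v (2 * t + 3) := by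
  rw [show 2 * (t + 1) + 1 = 2 * t + 1 + 1 + 1 by ring, sum_Icc_succ_top (by omega),
    sum_Icc_succ_top (by omega)]

def pairPosVecs (t B : ℕ) : Set (ℕ → ℕ) :=
  {v | (∀ j, j = 0 ∨ 2 * t + 1 < j → v j = 0) ∧
    (∑ j ∈ Icc 1 (2 * t + 1), v j) ≤ B ∧
    (∀ i, 1 ≤ i → i ≤ t → 0 < v (2 * i) + v (2 * i + 1))}

def nonzeroPairsSumLE (B : ℕ) : Finset (ℕ × ℕ) :=
  ((range (B + 1) ×ˢ range (B + 1)).erase (0, 0)).filter fun p => p.1 + p.2 ≤ B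

def appendPair (t : ℕ) (p : ℕ × ℕ) (w : ℕ → ℕ) : ℕ → ℕ :=
  Function.update (Function.update w (2 * t + 2) p.1) (2 * t + 3) p.2

theorem mem_nonzeroPairsSumLE {B : ℕ} {p : ℕ × ℕ} :
    p ∈ nonzeroPairsSumLE B ↔ 0 < p.1 + p.2 ∧ p.1 + p.2 ≤ B := by
  obtain ⟨a, b⟩ := p
  simp only [nonzeroPairsSumLE, mem_filter, mem_erase, mem_product, mem_range, ne_eq,
    Prod.mk.injEq]
  omega

theorem pairPosVecs_zero_subset (B : ℕ) :
    pairPosVecs 0 B ⊆ Pi.single (M := fun _ ↦ ℕ) 1 '' (range (B + 1) : Set ℕ) := by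
  rintro v ⟨hsupp, hsum, -⟩
  refine ⟨v 1, by simpa [Nat.lt_succ_iff] using hsum, funext fun j => ?_⟩
  rw [Pi.single_apply]
  split_ifs with hj
  · rw [hj]
  · exact (hsupp j (by omega)).symm

theorem pairPosVecs_succ_subset (t B : ℕ) :
    pairPosVecs (t + 1) B ⊆
      ⋃ p ∈ nonzeroPairsSumLE B, appendPair t p '' pairPosVecs t (B - (p.1 + p.2)) := by
  rintro v ⟨hsupp, hsum, hpairs⟩
  rw [sum_Icc_one_two_mul_succ_add_one] at hsum
  have hlast : 0 < v (2 * t + 2) + v (2 * t + 3) := hpairs (t + 1) (by omega) le_rfl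
  set w : ℕ → ℕ := fun j => if j ≤ 2 * t + 1 then v j else 0 with hw
  have hsum_w : ∑ j ∈ Icc 1 (2 * t + 1), w j = ∑ j ∈ Icc 1 (2 * t + 1), v j :=
    sum_congr rfl fun j hj => if_pos (mem_Icc.1 hj).2
  refine Set.mem_biUnion (x := (v (2 * t + 2), v (2 * t + 3))) ?_ ⟨w, ⟨?_, ?_, ?_⟩, ?_⟩
  · exact mem_nonzeroPairsSumLE.2 ⟨hlast, by omega⟩
  · intro j hj
    simp only [hw]
    split_ifs
    · exact hsupp j (by omega)
    · rfl
  · dsimp only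
    omega
  · intro i hi1 hi2
    simp only [hw, if_pos (show 2 * i ≤ 2 * t + 1 by omega),
      if_pos (show 2 * i + 1 ≤ 2 * t + 1 by omega)]
    exact hpairs i hi1 (by omega)
  · funext j
    simp only [appendPair, Function.update_apply, hw]
    split_ifs <;> first | (subst_vars; rfl) | rfl | exact (hsupp j (by omega)).symm

theorem pairPosVecs_finite_and_ncard_le (t B : ℕ) :
    (pairPosVecs t B).Finite ∧ ((pairPosVecs t B).ncard : ℝ) ≤ (2 + √2) ^ B := by
  induction t generalizing B with
  | zero =>
    have hsub := pairPosVecs_zero_subset B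
    have hfin : (Pi.single (M := fun _ ↦ ℕ) 1 '' (range (B + 1) : Set ℕ)).Finite :=
      (finite_toSet _).image _
    refine ⟨hfin.subset hsub, ?_⟩
    have hcard : (pairPosVecs 0 B).ncard ≤ B + 1 := by
      rw [← card_range (B + 1), ← Set.ncard_coe_finset (range _)]
      exact (Set.ncard_le_ncard hsub hfin).trans (Set.ncard_image_le (finite_toSet _))
    calc ((pairPosVecs 0 B).ncard : ℝ) ≤ B + 1 := by exact_mod_cast hcard
      _ ≤ 2 ^ B := by exact_mod_cast B.lt_two_pow_self
      _ ≤ (2 + √2) ^ B :=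
          pow_le_pow_left₀ zero_le_two (le_add_of_nonneg_right (Real.sqrt_nonneg 2)) B
  | succ t ih =>
    obtain ⟨hfin, hcard⟩ := Set.finite_and_ncard_le_sum_of_subset_biUnion_image
      (fun p _ => (ih _).1) (pairPosVecs_succ_subset t B)
    refine ⟨hfin, ?_⟩
    have hq : (2 + √2 : ℝ) ≠ 0 := by positivity
    calc ((pairPosVecs (t + 1) B).ncard : ℝ)
        ≤ ∑ p ∈ nonzeroPairsSumLE B, ((pairPosVecs t (B - (p.1 + p.2))).ncard : ℝ) := by
          exact_mod_cast hcard
      _ ≤ ∑ p ∈ nonzeroPairsSumLE B, (2 + √2) ^ B * (2 + √2)⁻¹ ^ (p.1 + p.2) := by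
          refine sum_le_sum fun p hp => (ih _).2.trans_eq ?_
          rw [inv_pow, ← pow_sub₀ _ hq (mem_nonzeroPairsSumLE.1 hp).2]
      _ = (2 + √2) ^ B * ∑ p ∈ nonzeroPairsSumLE B, (2 + √2)⁻¹ ^ (p.1 + p.2) := by
          rw [mul_sum]
      _ ≤ (2 + √2) ^ B * 1 := by
          refine mul_le_mul_of_nonneg_left ?_ (by positivity)
          refine (sum_le_sum_of_subset_of_nonneg (filter_subset _ _) fun _ _ _ => ?_).trans
            (sum_erase_zero_inv_two_add_sqrt_two_pow_le_one _)
          positivity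
      _ = (2 + √2) ^ B := mul_one _

theorem DNPvec_sep_subset_pairPosVecs {n t : ℕ} (hn : 1 ≤ n) (ht : t ≤ n - 1) :
    {v ∈ DNPvec n | 0 < v (2 * t) + v (2 * t + 1) ∧
      ∀ t', t < t' → t' ≤ n - 1 → v (2 * t') + v (2 * t' + 1) = 0} ⊆ pairPosVecs t n := by
  rintro v ⟨⟨hsupp, hsum, -, hchain⟩, hpos, htail⟩
  refine ⟨fun j hj => ?_, ?_, fun i hi1 hi2 => ?_⟩
  · by_cases hj' : j = 0 ∨ 2 * n - 1 < j
    · exact hsupp j hj'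
    · rcases Nat.even_or_odd' j with ⟨k, rfl | rfl⟩ <;>
        have := htail k (by omega) (by omega) <;> omega
  · exact (sum_le_sum_of_subset (Icc_subset_Icc_right (by omega))).trans hsum
  · rcases hi2.lt_or_eq with hlt | rfl
    · -- a zero pair before `t` would, by (iii), force the pair at `t` to vanish
      by_contra! hzero
      have hvanish := hchain i hi1 (by omega) (by omega) (by omega)
      have := hvanish (2 * t) (by omega)
      have := hvanish (2 * t + 1) (by omega)
      omega
    · exact hpos

/-- For fixed `t ∈ {1,…,n-1}`, the number of vectors `v` satisfying (i)–(iii) and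
having `t(v) = t` (i.e. `v_{2t} + v_{2t+1} > 0`, and `v_{2t'} + v_{2t'+1} = 0`
for every `t' ∈ {t+1,…,n-1}`) is at most `(2+√2)^n`. -/
theorem stmt3 :
    ∀ n : ℕ, 1 ≤ n → ∀ t : ℕ, 1 ≤ t → t ≤ n - 1 →
      (({v ∈ DNPvec n | 0 < v (2 * t) + v (2 * t + 1) ∧
          ∀ t', t < t' → t' ≤ n - 1 → v (2 * t') + v (2 * t' + 1) = 0}).ncard : ℝ)
        ≤ (2 + Real.sqrt 2) ^ n := by
  intro n hn t _ ht
  obtain ⟨hfin, hcard⟩ := pairPosVecs_finite_and_ncard_le t n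
  exact le_trans (by exact_mod_cast Set.ncard_le_ncard (DNPvec_sep_subset_pairPosVecs hn ht) hfin)
    hcard
end

section
/- The number of vectors v ∈ ℕ^{2n-1} satisfying conditions (i)–(iii) of the DNP-vector conditions, the bipartite condition (iv) (v_{2i} = 0 for even i ∈ {1,…,n-1} and v_{2i+1} = 0 for odd i ∈ {1,…,n-1}), and additionally ‖v‖₁ ≤ n/2, is O(2^{n/2}). -/
open Finset

section StallingSequences

variable {α : Type*} [LinearOrder α]

def nextAbove (s : Finset α) (m : α) : α :=
  if h : (s.filter (m < ·)).Nonempty then (s.filter (m < ·)).min' h else m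

lemma Monotone.isLeast_image_range_zero {a : ℕ → α} (ha : Monotone a) {n : ℕ} (hn : 0 < n) :
    IsLeast (((range n).image a : Finset α) : Set α) (a 0) := by
  refine ⟨by simpa using ⟨0, hn, rfl⟩, ?_⟩
  simp only [coe_image, coe_range, mem_lowerBounds, Set.forall_mem_image]
  intro t _
  exact ha t.zero_le

lemma Monotone.apply_succ_eq_nextAbove {a : ℕ → α} (ha : Monotone a)
    (hstall : ∀ t, a (t + 1) = a t → ∀ j, t ≤ j → a j = a t) {n k : ℕ} (hk : k + 1 < n) :
    a (k + 1) = nextAbove ((range n).image a) (a k) := by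
  have above_lt : ∀ t, a k < a t → k < t := fun t h =>
    lt_of_not_ge fun htk => (ha htk).not_gt h
  unfold nextAbove
  rcases (ha k.le_succ).eq_or_lt with hstop | hstep
  · have hnone : ¬((image a (range n)).filter (a k < ·)).Nonempty := by
      simp only [Finset.Nonempty, mem_filter, mem_image, mem_range]
      rintro ⟨_, ⟨t, -, rfl⟩, hlt⟩
      exact hlt.ne' (hstall k hstop.symm t (above_lt t hlt).le)
    rw [dif_neg hnone, hstop]
  · have hmem : a (k + 1) ∈ (image a (range n)).filter (a k < ·) := by
      simpa using ⟨⟨k + 1, hk, rfl⟩, hstep⟩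
    rw [dif_pos ⟨_, hmem⟩]
    refine ((min'_eq_iff _ _ _).2 ⟨hmem, ?_⟩).symm
    simp only [mem_filter, mem_image]
    rintro _ ⟨⟨t, -, rfl⟩, hlt⟩
    exact ha (above_lt t hlt)

lemma Monotone.eqOn_of_image_range_eq {a b : ℕ → α} (ha : Monotone a) (hb : Monotone b)
    (ha_stall : ∀ t, a (t + 1) = a t → ∀ j, t ≤ j → a j = a t)
    (hb_stall : ∀ t, b (t + 1) = b t → ∀ j, t ≤ j → b j = b t)
    {n : ℕ} (h : (range n).image a = (range n).image b) : ∀ i < n, a i = b i := by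
  intro i hi
  induction i with
  | zero => exact (ha.isLeast_image_range_zero hi).unique (h ▸ hb.isLeast_image_range_zero hi)
  | succ k ih =>
    rw [ha.apply_succ_eq_nextAbove ha_stall hi, hb.apply_succ_eq_nextAbove hb_stall hi, h,
      ih (by omega)]

end StallingSequences

def blockSum (v : ℕ → ℕ) (i : ℕ) : ℕ := ∑ j ∈ Icc 1 (2 * i + 1), v j

lemma blockSum_zero (v : ℕ → ℕ) : blockSum v 0 = v 1 := by
  simp [blockSum]

lemma blockSum_succ (v : ℕ → ℕ) (t : ℕ) :
    blockSum v (t + 1) = blockSum v t + v (2 * (t + 1)) + v (2 * (t + 1) + 1) := by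
  rw [blockSum, sum_Icc_succ_top (by omega), mul_add_one, sum_Icc_succ_top (by omega), blockSum]

lemma blockSum_mono (v : ℕ → ℕ) : Monotone (blockSum v) := fun _ _ h =>
  sum_le_sum_of_subset (Icc_subset_Icc le_rfl (by omega))

lemma blockSum_le_sum_Icc {v : ℕ → ℕ} {m : ℕ} (hv : ∀ j, m < j → v j = 0) (i : ℕ) :
    blockSum v i ≤ ∑ j ∈ Icc 1 m, v j := by
  refine sum_le_sum_of_ne_zero fun j hj hvj => ?_
  simp only [mem_Icc] at hj ⊢
  exact ⟨hj.1, not_lt.1 (mt (hv j) hvj)⟩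

lemma blockSum_eq_of_forall_le_eq_zero {v : ℕ → ℕ} {t : ℕ}
    (hv : ∀ j, 2 * t + 2 ≤ j → v j = 0) {i : ℕ} (hti : t ≤ i) : blockSum v i = blockSum v t := by
  refine (sum_subset (Icc_subset_Icc le_rfl (by omega)) fun j hj hjt => hv j ?_).symm
  simp only [mem_Icc] at hj hjt
  omega

namespace DNPvec

variable {n : ℕ} {v : ℕ → ℕ}

lemma eq_zero_of_blockSum_succ_eq (hv : v ∈ DNPvec n) {t : ℕ}
    (ht : blockSum v (t + 1) = blockSum v t) : ∀ j, 2 * t + 2 ≤ j → v j = 0 := by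
  obtain ⟨hsupp, -, -, hstop⟩ := hv
  have hblock := blockSum_succ v t
  intro j hj
  obtain rfl | rfl | hj : j = 2 * (t + 1) ∨ j = 2 * (t + 1) + 1 ∨ 2 * t + 4 ≤ j := by omega
  · omega
  · omega
  by_cases htn : t + 1 ≤ n - 2
  · exact hstop (t + 1) (by omega) htn (by omega) (by omega) j (by omega)
  · exact hsupp j (.inr (by omega))

lemma blockSum_stalls (hv : v ∈ DNPvec n) :
    ∀ t, blockSum v (t + 1) = blockSum v t → ∀ i, t ≤ i → blockSum v i = blockSum v t :=
  fun _ ht _ => blockSum_eq_of_forall_le_eq_zero (eq_zero_of_blockSum_succ_eq hv ht)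

end DNPvec

def smallBipartiteDNPvec (n : ℕ) : Set (ℕ → ℕ) :=
  {v ∈ DNPvec n |
    (∀ i, 1 ≤ i → i ≤ n - 1 → Even i → v (2 * i) = 0) ∧
    (∀ i, 1 ≤ i → i ≤ n - 1 → Odd i → v (2 * i + 1) = 0) ∧
    2 * (∑ j ∈ Finset.Icc 1 (2 * n - 1), v j) ≤ n}

namespace smallBipartiteDNPvec

variable {n : ℕ} {u v : ℕ → ℕ}

lemma eq_of_blockSum_eq (hu : u ∈ smallBipartiteDNPvec n) (hv : v ∈ smallBipartiteDNPvec n)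
    (h : ∀ i < n, blockSum u i = blockSum v i) : u = v := by
  obtain ⟨⟨hu_supp, -⟩, hu_even, hu_odd, -⟩ := hu
  obtain ⟨⟨hv_supp, -⟩, hv_even, hv_odd, -⟩ := hv
  funext j
  by_cases hj : j = 0 ∨ 2 * n - 1 < j
  · rw [hu_supp j hj, hv_supp j hj]
  obtain rfl | hj2 : j = 1 ∨ 2 ≤ j := by omega
  · rw [← blockSum_zero u, ← blockSum_zero v, h 0 (by omega)]
  obtain ⟨t, htn, rfl | rfl⟩ : ∃ t, t + 2 ≤ n ∧ (j = 2 * (t + 1) ∨ j = 2 * (t + 1) + 1) :=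
    ⟨j / 2 - 1, by omega, by omega⟩
  all_goals
    have hS := h t (by omega)
    have hS_succ := h (t + 1) (by omega)
    have hu_step := blockSum_succ u t
    have hv_step := blockSum_succ v t
    rcases Nat.even_or_odd (t + 1) with hpar | hpar
    · have hu_zero := hu_even (t + 1) (by omega) (by omega) hpar
      have hv_zero := hv_even (t + 1) (by omega) (by omega) hpar
      omega
    · have hu_zero := hu_odd (t + 1) (by omega) (by omega) hpar
      have hv_zero := hv_odd (t + 1) (by omega) (by omega) hpar
      omega

lemma injOn_image_blockSum :
    Set.InjOn (fun v => (range n).image (blockSum v)) (smallBipartiteDNPvec n) :=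
  fun _ hu _ hv h => eq_of_blockSum_eq hu hv <|
    (blockSum_mono _).eqOn_of_image_range_eq (blockSum_mono _)
      (DNPvec.blockSum_stalls hu.1) (DNPvec.blockSum_stalls hv.1) h

lemma image_blockSum_subset (hv : v ∈ smallBipartiteDNPvec n) :
    (range n).image (blockSum v) ⊆ range (n / 2 + 1) := by
  intro x hx
  obtain ⟨i, -, rfl⟩ := mem_image.1 hx
  have hle := blockSum_le_sum_Icc (fun j hj => hv.1.1 j (.inr hj)) i
  have hsmall := hv.2.2.2
  rw [mem_range]
  omega

lemma ncard_le : (smallBipartiteDNPvec n).ncard ≤ 2 ^ (n / 2 + 1) := by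
  calc (smallBipartiteDNPvec n).ncard
      ≤ ((range (n / 2 + 1)).powerset : Set (Finset ℕ)).ncard :=
        Set.ncard_le_ncard_of_injOn _ (fun _ hv => mem_powerset.2 (image_blockSum_subset hv))
          injOn_image_blockSum (finite_toSet _)
    _ = 2 ^ (n / 2 + 1) := by rw [Set.ncard_coe_finset, card_powerset, card_range]

end smallBipartiteDNPvec

lemma two_pow_half_succ_le_two_mul_sqrt_two_pow (n : ℕ) :
    (2 : ℝ) ^ (n / 2 + 1) ≤ 2 * Real.sqrt 2 ^ n := by
  rw [pow_succ', ← Real.sq_sqrt (zero_le_two : (0 : ℝ) ≤ 2), ← pow_mul, Real.sq_sqrt zero_le_two]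
  gcongr
  · exact Real.one_lt_sqrt_two.le
  · omega

/-- The number of vectors `v` satisfying (i)–(iii), the bipartite condition (iv)
(`v_{2i} = 0` for even `i ∈ {1,…,n-1}`, `v_{2i+1} = 0` for odd `i ∈ {1,…,n-1}`),
and `‖v‖₁ ≤ n/2`, is `O(2^{n/2})`, i.e. at most `C · (√2)^n` for an absolute
constant `C`. -/
theorem stmt6 :
    ∃ C : ℝ, ∀ n : ℕ,
      (({v ∈ DNPvec n |
          (∀ i, 1 ≤ i → i ≤ n - 1 → Even i → v (2 * i) = 0) ∧
          (∀ i, 1 ≤ i → i ≤ n - 1 → Odd i → v (2 * i + 1) = 0) ∧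
          2 * (∑ j ∈ Finset.Icc 1 (2 * n - 1), v j) ≤ n}).ncard : ℝ)
        ≤ C * Real.sqrt 2 ^ n := by
  refine ⟨2, fun n => ?_⟩
  calc ((smallBipartiteDNPvec n).ncard : ℝ)
      ≤ (2 : ℝ) ^ (n / 2 + 1) := by exact_mod_cast smallBipartiteDNPvec.ncard_le
    _ ≤ 2 * Real.sqrt 2 ^ n := two_pow_half_succ_le_two_mul_sqrt_two_pow n
end

section
/- Let δ be the solution to the DNP-game equations on a directed graph with n nodes and discount λ ∈ (0,1). Then for every node v, δ(v) ∈ {λ^i : 0 ≤ i ≤ n-1} ∪ {0} ∪ {-λ^i : 0 ≤ i ≤ n-1}. -/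
/-!
Every nonzero value `δ v` is either `±1` (at a sink) or `λ · δ b` for a successor `b`,
and then `|δ v| < |δ b|`. Following successors therefore climbs strictly in `|δ|`, so it
reaches `±1` after fewer steps than there are nodes `w` with `|δ v| ≤ |δ w|`.
-/

/-- `δ : V → ℝ` solves the optimality equations of the discounted normal play
game on the directed graph `E` with Max-nodes `isMax` and discount `lam`:
`δ(s) = -1` on Max-sinks, `δ(s) = 1` on Min-sinks,
`δ(a) = λ · max_{(a,b) ∈ E} δ(b)` on non-sink Max nodes and
`δ(a) = λ · min_{(a,b) ∈ E} δ(b)` on non-sink Min nodes. -/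
def DNPsol {V : Type*} (E : V → V → Prop) (isMax : V → Prop) (lam : ℝ)
    (δ : V → ℝ) : Prop :=
  (∀ a, isMax a → (∀ b, ¬E a b) → δ a = -1) ∧
  (∀ a, ¬isMax a → (∀ b, ¬E a b) → δ a = 1) ∧
  (∀ a, isMax a → (∃ b, E a b) →
    ∃ b, E a b ∧ δ a = lam * δ b ∧ ∀ c, E a c → δ c ≤ δ b) ∧
  (∀ a, ¬isMax a → (∃ b, E a b) →
    ∃ b, E a b ∧ δ a = lam * δ b ∧ ∀ c, E a c → δ b ≤ δ c)

section AbsRank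

variable {V : Type*} [Fintype V] {f : V → ℝ}

theorem card_abs_le_lt_of_abs_lt {v w : V} (h : |f v| < |f w|) :
    (Finset.univ.filter fun u => |f w| ≤ |f u|).card <
      (Finset.univ.filter fun u => |f v| ≤ |f u|).card := by
  refine Finset.card_lt_card <| (Finset.ssubset_iff_of_subset ?_).mpr ⟨v, by simp, by simpa⟩
  intro u
  simp only [Finset.mem_filter, Finset.mem_univ, true_and]
  exact h.le.trans

variable {c : ℝ}

theorem eq_zero_or_exists_lt_rank_eq_pow (hc : |c| < 1)
    (hf : ∀ v, f v = 1 ∨ f v = -1 ∨ ∃ w, f v = c * f w) (N : ℕ) :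
    ∀ v, (Finset.univ.filter fun u => |f v| ≤ |f u|).card ≤ N →
      f v = 0 ∨ ∃ i < N, f v = c ^ i ∨ f v = -c ^ i := by
  induction N with
  | zero =>
    intro v hv
    exact absurd hv (Finset.card_pos.mpr ⟨v, by simp⟩).not_ge
  | succ N ih =>
    intro v hv
    rcases hf v with h | h | ⟨w, hw⟩
    · exact .inr ⟨0, N.succ_pos, .inl (by simp [h])⟩
    · exact .inr ⟨0, N.succ_pos, .inr (by simp [h])⟩
    by_cases hv0 : f v = 0
    · exact .inl hv0
    have hw0 : f w ≠ 0 := fun h => hv0 (by simp [hw, h])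
    have hlt : |f v| < |f w| := by
      rw [hw, abs_mul]
      exact mul_lt_of_lt_one_left (abs_pos.mpr hw0) hc
    rcases ih w (by have := card_abs_le_lt_of_abs_lt hlt; omega) with h | ⟨i, hi, h | h⟩
    · exact absurd h hw0
    · exact .inr ⟨i + 1, by omega, .inl (by rw [hw, h, pow_succ'])⟩
    · exact .inr ⟨i + 1, by omega, .inr (by rw [hw, h, pow_succ', mul_neg])⟩

theorem eq_zero_or_exists_lt_card_eq_pow (hc : |c| < 1)
    (hf : ∀ v, f v = 1 ∨ f v = -1 ∨ ∃ w, f v = c * f w) (v : V) :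
    f v = 0 ∨ ∃ i < Fintype.card V, f v = c ^ i ∨ f v = -c ^ i :=
  eq_zero_or_exists_lt_rank_eq_pow hc hf _ v (Finset.card_le_univ _)

end AbsRank

theorem DNPsol.eq_one_or_eq_neg_one_or_exists_eq_mul {V : Type*} {E : V → V → Prop}
    {isMax : V → Prop} {lam : ℝ} {δ : V → ℝ} (hδ : DNPsol E isMax lam δ) (v : V) :
    δ v = 1 ∨ δ v = -1 ∨ ∃ w, δ v = lam * δ w := by
  obtain ⟨hMaxSink, hMinSink, hMax, hMin⟩ := hδ
  by_cases hsink : ∀ w, ¬E v w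
  · by_cases hv : isMax v
    · exact .inr (.inl (hMaxSink v hv hsink))
    · exact .inl (hMinSink v hv hsink)
  · push Not at hsink
    by_cases hv : isMax v
    · obtain ⟨w, -, hw, -⟩ := hMax v hv hsink
      exact .inr (.inr ⟨w, hw⟩)
    · obtain ⟨w, -, hw, -⟩ := hMin v hv hsink
      exact .inr (.inr ⟨w, hw⟩)

/-- Any solution of the DNP-game equations on a graph with `n` nodes takes
values in `{λ^i : 0 ≤ i ≤ n-1} ∪ {0} ∪ {-λ^i : 0 ≤ i ≤ n-1}`. -/
theorem stmt9 {V : Type*} [Fintype V] (E : V → V → Prop) (isMax : V → Prop)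
    (lam : ℝ) (hlam0 : 0 < lam) (hlam1 : lam < 1) (δ : V → ℝ)
    (hδ : DNPsol E isMax lam δ) :
    ∀ v : V, δ v = 0 ∨
      ∃ i : ℕ, i ≤ Fintype.card V - 1 ∧ (δ v = lam ^ i ∨ δ v = -lam ^ i) := by
  intro v
  have hlam : |lam| < 1 := abs_lt.mpr ⟨by linarith, hlam1⟩
  rcases eq_zero_or_exists_lt_card_eq_pow hlam hδ.eq_one_or_eq_neg_one_or_exists_eq_mul v
    with h | ⟨i, hi, h⟩
  · exact .inl h
  · exact .inr ⟨i, by omega, h⟩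
end

section
/- Let δ be the solution to the DNP-game equations with discount λ ∈ (0,1) on a finite directed acyclic graph. Then δ(v) ≠ 0 for every node v. -/
/-!
Since the graph is finite and acyclic, the successor relation is well-founded, so one can argue
by induction from the sinks: a sink has value `±1`, and a non-sink node has value `λ · δ(b)` for
the successor `b` realising the max or min, which is nonzero by induction since `λ ≠ 0`.
-/

namespace Relation.TransGen

theorem exists_path {V : Type*} {E : V → V → Prop} {a b : V} (h : TransGen E a b) :
    ∃ (c : ℕ → V) (l : ℕ), 1 ≤ l ∧ (∀ i < l, E (c i) (c (i + 1))) ∧ c 0 = a ∧ c l = b := by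
  induction h with
  | @single d had =>
    refine ⟨fun i => if i = 0 then a else d, 1, le_rfl, ?_, rfl, rfl⟩
    intro i hi
    obtain rfl : i = 0 := by omega
    simpa using had
  | @tail b d _ hbd ih =>
    obtain ⟨c, l, hl, hpath, hc0, hcl⟩ := ih
    refine ⟨fun i => if i ≤ l then c i else d, l + 1, by omega, ?_, by simp [hc0], by simp⟩
    intro i hi
    rcases Nat.lt_succ_iff_lt_or_eq.mp hi with hil | rfl
    · simpa [hil.le, Nat.succ_le_of_lt hil] using hpath i hil
    · simpa [hcl] using hbd

end Relation.TransGen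

theorem wellFounded_flip_of_forall_path_ne {V : Type*} [Finite V] {E : V → V → Prop}
    (hacyc : ∀ (c : ℕ → V) (l : ℕ), 1 ≤ l → (∀ i, i < l → E (c i) (c (i + 1))) → c l ≠ c 0) :
    WellFounded (flip E) := by
  have hirrefl : ∀ a, ¬ Relation.TransGen E a a := fun a ha => by
    obtain ⟨c, l, hl, hpath, hc0, hcl⟩ := ha.exists_path
    exact hacyc c l hl hpath (hcl.trans hc0.symm)
  have : Std.Irrefl (Relation.TransGen (flip E)) :=
    ⟨fun a ha => hirrefl a (Relation.transGen_swap.mp ha)⟩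
  exact Subrelation.wf Relation.TransGen.single (Finite.wellFounded_of_trans_of_irrefl _)

namespace DNPsol

variable {V : Type*} {E : V → V → Prop} {isMax : V → Prop} {lam : ℝ} {δ : V → ℝ}

theorem eq_neg_one_or_one_of_sink (hδ : DNPsol E isMax lam δ) {a : V} (ha : ∀ b, ¬E a b) :
    δ a = -1 ∨ δ a = 1 := by
  by_cases hmax : isMax a
  · exact .inl (hδ.1 a hmax ha)
  · exact .inr (hδ.2.1 a hmax ha)

theorem exists_eq_mul (hδ : DNPsol E isMax lam δ) {a : V} (ha : ∃ b, E a b) :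
    ∃ b, E a b ∧ δ a = lam * δ b := by
  by_cases hmax : isMax a
  · obtain ⟨b, hab, heq, -⟩ := hδ.2.2.1 a hmax ha
    exact ⟨b, hab, heq⟩
  · obtain ⟨b, hab, heq, -⟩ := hδ.2.2.2 a hmax ha
    exact ⟨b, hab, heq⟩

theorem ne_zero (hδ : DNPsol E isMax lam δ) (hlam : lam ≠ 0) (hwf : WellFounded (flip E))
    (v : V) : δ v ≠ 0 := by
  induction v using hwf.induction with
  | _ a ih =>
    by_cases ha : ∃ b, E a b
    · obtain ⟨b, hab, heq⟩ := hδ.exists_eq_mul ha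
      rw [heq]
      exact mul_ne_zero hlam (ih b hab)
    · push Not at ha
      rcases hδ.eq_neg_one_or_one_of_sink ha with h | h <;> norm_num [h]

end DNPsol

theorem stmt11_general {V : Type*} [Fintype V] (E : V → V → Prop) (isMax : V → Prop)
    (lam : ℝ) (hlam0 : 0 < lam) (δ : V → ℝ)
    (hδ : DNPsol E isMax lam δ)
    (hacyc : ∀ (c : ℕ → V) (l : ℕ), 1 ≤ l →
      (∀ i, i < l → E (c i) (c (i + 1))) → c l ≠ c 0) :
    ∀ v : V, δ v ≠ 0 :=
  hδ.ne_zero hlam0.ne' (wellFounded_flip_of_forall_path_ne hacyc)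

/-- On a finite directed acyclic graph, any solution of the DNP-game equations
with discount `λ ∈ (0,1)` is nonzero at every node. -/
theorem stmt11 {V : Type*} [Fintype V] (E : V → V → Prop) (isMax : V → Prop)
    (lam : ℝ) (hlam0 : 0 < lam) (hlam1 : lam < 1) (δ : V → ℝ)
    (hδ : DNPsol E isMax lam δ)
    (hacyc : ∀ (c : ℕ → V) (l : ℕ), 1 ≤ l →
      (∀ i, i < l → E (c i) (c (i + 1))) → c l ≠ c 0) :
    ∀ v : V, δ v ≠ 0 :=
  stmt11_general E isMax lam hlam0 δ hδ hacyc
end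

section
/- Let δ be the solution to the DNP-game equations with discount λ ∈ (0,1) on a finite directed graph with n nodes. For each i ∈ {0,…,n-1}, if the set {a : δ(a) = λ^i} is empty, then the set {a : δ(a) = λ^j} is empty for every j ∈ {i+1,…,n-1}. -/
namespace DNPsol

variable {V : Type*} {E : V → V → Prop} {isMax : V → Prop} {lam : ℝ} {δ : V → ℝ}

theorem exists_edge_eq_mul (hδ : DNPsol E isMax lam δ) {a : V} (hne_one : δ a ≠ 1)
    (hne_neg_one : δ a ≠ -1) :
    ∃ b, E a b ∧ δ a = lam * δ b := by
  obtain ⟨hMaxSink, hMinSink, hMaxMove, hMinMove⟩ := hδ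
  have hmove : ∃ b, E a b := by
    by_contra! hsink
    by_cases hmax : isMax a
    · exact hne_neg_one (hMaxSink a hmax hsink)
    · exact hne_one (hMinSink a hmax hsink)
  by_cases hmax : isMax a
  · obtain ⟨b, hab, heq, -⟩ := hMaxMove a hmax hmove
    exact ⟨b, hab, heq⟩
  · obtain ⟨b, hab, heq, -⟩ := hMinMove a hmax hmove
    exact ⟨b, hab, heq⟩

theorem exists_edge_eq_pow (hδ : DNPsol E isMax lam δ) (hlam0 : 0 < lam) (hlam1 : lam < 1)
    {a : V} {j : ℕ} (ha : δ a = lam ^ (j + 1)) : ∃ b, E a b ∧ δ b = lam ^ j := by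
  have hpos : 0 < lam ^ (j + 1) := pow_pos hlam0 _
  have hlt : lam ^ (j + 1) < 1 := pow_lt_one₀ hlam0.le hlam1 j.succ_ne_zero
  obtain ⟨b, hab, heq⟩ := hδ.exists_edge_eq_mul (by linarith) (by linarith)
  refine ⟨b, hab, mul_left_cancel₀ hlam0.ne' ?_⟩
  rw [← heq, ha, pow_succ']

theorem forall_ne_pow_of_le (hδ : DNPsol E isMax lam δ) (hlam0 : 0 < lam) (hlam1 : lam < 1)
    {i : ℕ} (hi : ∀ a, δ a ≠ lam ^ i) {j : ℕ} (hij : i ≤ j) : ∀ a, δ a ≠ lam ^ j := by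
  induction j, hij using Nat.le_induction with
  | base => exact hi
  | succ j _ ih =>
    intro a ha
    obtain ⟨b, -, hb⟩ := hδ.exists_edge_eq_pow hlam0 hlam1 ha
    exact ih b hb

end DNPsol

/-- For a DNP-game solution `δ` on a graph with `n` nodes: if no node has value
`λ^i`, then no node has value `λ^j` for any `j ∈ {i+1,…,n-1}`. -/
theorem stmt12 {V : Type*} [Fintype V] (E : V → V → Prop) (isMax : V → Prop)
    (lam : ℝ) (hlam0 : 0 < lam) (hlam1 : lam < 1) (δ : V → ℝ)
    (hδ : DNPsol E isMax lam δ) :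
    ∀ i, i ≤ Fintype.card V - 1 → {a : V | δ a = lam ^ i} = ∅ →
      ∀ j, i + 1 ≤ j → j ≤ Fintype.card V - 1 → {a : V | δ a = lam ^ j} = ∅ := by
  intro i _ hi j hij _
  rw [Set.eq_empty_iff_forall_notMem] at hi ⊢
  exact hδ.forall_ne_pow_of_le hlam0 hlam1 hi (by omega)
end

section
/- Let G be a finite bipartite directed graph (every edge goes from V_Max to V_Min or vice versa), let λ ∈ (0,1), and let δ be the solution to the DNP-game equations. Then for every i ∈ {0,…,n-1}: every node a with δ(a) = λ^i lies in V_Min if i is even and in V_Max if i is odd. -/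
namespace DNPsol

variable {V : Type*} {E : V → V → Prop} {isMax : V → Prop} {lam : ℝ} {δ : V → ℝ}

theorem exists_edge_of_abs_ne_one (hδ : DNPsol E isMax lam δ) {a : V} (ha : |δ a| ≠ 1) :
    ∃ b, E a b ∧ δ a = lam * δ b := by
  obtain ⟨hMaxSink, hMinSink, hMax, hMin⟩ := hδ
  by_cases hs : ∃ b, E a b
  · by_cases hM : isMax a
    · obtain ⟨b, hab, hb, -⟩ := hMax a hM hs
      exact ⟨b, hab, hb⟩
    · obtain ⟨b, hab, hb, -⟩ := hMin a hM hs
      exact ⟨b, hab, hb⟩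
  · push Not at hs
    by_cases hM : isMax a
    · simp [hMaxSink a hM hs] at ha
    · simp [hMinSink a hM hs] at ha

theorem abs_le_one [Finite V] (hδ : DNPsol E isMax lam δ) (hlam : |lam| < 1) (a : V) :
    |δ a| ≤ 1 := by
  have := Fintype.ofFinite V
  obtain ⟨m, -, hm⟩ := Finset.univ.exists_max_image (fun x => |δ x|) ⟨a, Finset.mem_univ a⟩
  by_contra! ha
  have hm1 : 1 < |δ m| := ha.trans_le (hm a (Finset.mem_univ a))
  obtain ⟨b, -, hb⟩ := hδ.exists_edge_of_abs_ne_one hm1.ne'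
  have : |δ m| < |δ m| :=
    calc |δ m| = |lam| * |δ b| := by rw [hb, abs_mul]
      _ ≤ |lam| * |δ m| := mul_le_mul_of_nonneg_left (hm b (Finset.mem_univ b)) (abs_nonneg _)
      _ < 1 * |δ m| := mul_lt_mul_of_pos_right hlam (by linarith)
      _ = |δ m| := one_mul _
  exact this.false

theorem lt_one_of_isMax [Finite V] (hδ : DNPsol E isMax lam δ) (hlam0 : 0 ≤ lam)
    (hlam1 : lam < 1) {a : V} (ha : isMax a) : δ a < 1 := by
  by_cases hs : ∃ b, E a b
  · obtain ⟨b, -, hb, -⟩ := hδ.2.2.1 a ha hs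
    have hb1 : δ b ≤ 1 := (le_abs_self _).trans (hδ.abs_le_one (by rwa [abs_of_nonneg hlam0]) b)
    calc δ a = lam * δ b := hb
      _ ≤ lam * 1 := mul_le_mul_of_nonneg_left hb1 hlam0
      _ < 1 := by rwa [mul_one]
  · push Not at hs
    rw [hδ.1 a ha hs]
    norm_num

theorem isMax_iff_odd_of_eq_pow [Finite V] (hδ : DNPsol E isMax lam δ) (hlam0 : 0 < lam)
    (hlam1 : lam < 1) (hbip : ∀ a b, E a b → (isMax a ↔ ¬isMax b)) :
    ∀ (i : ℕ) (a : V), δ a = lam ^ i → (isMax a ↔ Odd i) := by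
  intro i
  induction i with
  | zero =>
    intro a ha
    simpa using fun hM => (hδ.lt_one_of_isMax hlam0.le hlam1 hM).ne (by simpa using ha)
  | succ n ih =>
    intro a ha
    have hpow_pos : 0 < lam ^ (n + 1) := pow_pos hlam0 _
    have hpow_lt : lam ^ (n + 1) < 1 := pow_lt_one₀ hlam0.le hlam1 n.succ_ne_zero
    obtain ⟨b, hab, hb⟩ :=
      hδ.exists_edge_of_abs_ne_one (by rw [ha, abs_of_pos hpow_pos]; exact hpow_lt.ne)
    have hδb : δ b = lam ^ n := by
      refine mul_left_cancel₀ hlam0.ne' ?_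
      rw [← hb, ha, pow_succ']
    rw [hbip a b hab, ih b hδb, Nat.odd_add_one]

end DNPsol

/-- On a finite bipartite graph (every edge joins a Max node and a Min node),
for any DNP-game solution `δ` and any `i ∈ {0,…,n-1}`: a node with value
`λ^i` is a Min node if `i` is even and a Max node if `i` is odd. -/
theorem stmt16 {V : Type*} [Fintype V] (E : V → V → Prop) (isMax : V → Prop)
    (lam : ℝ) (hlam0 : 0 < lam) (hlam1 : lam < 1)
    (hbip : ∀ a b, E a b → (isMax a ↔ ¬isMax b))
    (δ : V → ℝ) (hδ : DNPsol E isMax lam δ) :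
    ∀ i, i ≤ Fintype.card V - 1 → ∀ a : V, δ a = lam ^ i →
      (Even i → ¬isMax a) ∧ (Odd i → isMax a) := by
  intro i _ a ha
  have hparity := hδ.isMax_iff_odd_of_eq_pow hlam0 hlam1 hbip i a ha
  exact ⟨fun he => hparity.not.mpr (Nat.not_odd_iff_even.mpr he), hparity.mpr⟩
end

section
/- Let x be a point of the polyhedron of potentials of a finite bipartite energy game with no zero cycles, let δ_x be the DNP-game solution on the tight-edge graph G_x, and let χ⁺ be the characteristic vector of V⁺ = {a : δ_x(a) > 0}. Then χ⁺ is a feasible shift for x: for every edge (a,b) tight for x, χ⁺(a) ≥ χ⁺(b) if a ∈ V_Max and χ⁺(a) ≤ χ⁺(b) if a ∈ V_Min; consequently x + εχ⁺ lies in the polyhedron of potentials for all sufficiently small ε > 0. -/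
open Filter Topology

section Potentials

variable {V : Type*} (E : V → V → Prop) (w : V → V → ℝ) (isMax : V → Prop)

def IsPotential (x : V → ℝ) : Prop :=
  (∀ a b, E a b → isMax a → w a b + x b ≤ x a) ∧
    (∀ a b, E a b → ¬isMax a → x a ≤ w a b + x b)

def IsFeasibleShift (x s : V → ℝ) : Prop :=
  ∀ a b, E a b → x a = w a b + x b → (isMax a → s b ≤ s a) ∧ (¬isMax a → s a ≤ s b)

variable {E w isMax}

theorem eventually_add_mul_le_add_mul {p q u v : ℝ} (hpq : p ≤ q) (htight : p = q → u ≤ v) :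
    ∀ᶠ ε in 𝓝[>] (0 : ℝ), p + ε * u ≤ q + ε * v := by
  rcases hpq.eq_or_lt with rfl | hlt
  · filter_upwards [self_mem_nhdsWithin] with ε hε
    exact add_le_add_right (mul_le_mul_of_nonneg_left (htight rfl) (le_of_lt hε)) p
  · have hlim : ∀ r c : ℝ, Tendsto (fun ε : ℝ => r + ε * c) (𝓝[>] 0) (𝓝 r) := fun r c =>
      ((by fun_prop : Continuous fun ε : ℝ => r + ε * c).tendsto' 0 r (by simp)).mono_left
        nhdsWithin_le_nhds
    exact ((hlim p u).eventually_lt (hlim q v) hlt).mono fun _ => le_of_lt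

theorem IsPotential.eventually_add_mul [Finite V] {x s : V → ℝ} (hx : IsPotential E w isMax x)
    (hs : IsFeasibleShift E w isMax x s) :
    ∀ᶠ ε in 𝓝[>] (0 : ℝ), IsPotential E w isMax (fun v => x v + ε * s v) := by
  refine (eventually_all.2 fun a => eventually_all.2 fun b => ?_).and
    (eventually_all.2 fun a => eventually_all.2 fun b => ?_)
  · by_cases hab : E a b ∧ isMax a
    · filter_upwards [eventually_add_mul_le_add_mul (hx.1 a b hab.1 hab.2)
        fun ht => (hs a b hab.1 ht.symm).1 hab.2] with ε hε
      intro _ _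
      linarith
    · exact Eventually.of_forall fun _ h h' => absurd ⟨h, h'⟩ hab
  · by_cases hab : E a b ∧ ¬isMax a
    · filter_upwards [eventually_add_mul_le_add_mul (hx.2 a b hab.1 hab.2)
        fun ht => (hs a b hab.1 ht).2 hab.2] with ε hε
      intro _ _
      linarith
    · exact Eventually.of_forall fun _ h h' => absurd ⟨h, h'⟩ hab

theorem IsPotential.exists_add_mul [Finite V] {x s : V → ℝ} (hx : IsPotential E w isMax x)
    (hs : IsFeasibleShift E w isMax x s) :
    ∃ ε₀ : ℝ, 0 < ε₀ ∧ ∀ ε : ℝ, 0 < ε → ε ≤ ε₀ →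
      IsPotential E w isMax (fun v => x v + ε * s v) := by
  obtain ⟨ε₀, hε₀, hsub⟩ := mem_nhdsGT_iff_exists_Ioc_subset.1 (hx.eventually_add_mul hs)
  exact ⟨ε₀, hε₀, fun ε hε hε₀ => hsub ⟨hε, hε₀⟩⟩

end Potentials

theorem ite_one_zero_le_ite_one_zero {p q : Prop} [Decidable p] [Decidable q] (h : p → q) :
    (if p then (1 : ℝ) else 0) ≤ if q then 1 else 0 := by
  split_ifs <;> simp_all

namespace DNPsol

variable {V : Type*} {E : V → V → Prop} {isMax : V → Prop} {lam : ℝ} {δ : V → ℝ}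

theorem pos_of_isMax_of_pos (hδ : DNPsol E isMax lam δ) (hlam : 0 < lam) {a b : V}
    (ha : isMax a) (hab : E a b) (hb : 0 < δ b) : 0 < δ a := by
  obtain ⟨c, -, hac, hc⟩ := hδ.2.2.1 a ha ⟨b, hab⟩
  rw [hac]
  exact mul_pos hlam (hb.trans_le (hc b hab))

theorem pos_of_not_isMax_of_pos (hδ : DNPsol E isMax lam δ) (hlam : 0 < lam) {a b : V}
    (ha : ¬isMax a) (hab : E a b) (ha' : 0 < δ a) : 0 < δ b := by
  obtain ⟨c, -, hac, hc⟩ := hδ.2.2.2 a ha ⟨b, hab⟩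
  exact (pos_of_mul_pos_right (hac ▸ ha') hlam.le).trans_le (hc b hab)

open Classical in
theorem isFeasibleShift_ite_pos {w : V → V → ℝ} {x : V → ℝ}
    (hδ : DNPsol (fun a b => E a b ∧ x a = w a b + x b) isMax lam δ) (hlam : 0 < lam) :
    IsFeasibleShift E w isMax x (fun v => if 0 < δ v then 1 else 0) := fun _ _ hab ht =>
  ⟨fun ha => ite_one_zero_le_ite_one_zero (hδ.pos_of_isMax_of_pos hlam ha ⟨hab, ht⟩),
    fun ha => ite_one_zero_le_ite_one_zero (hδ.pos_of_not_isMax_of_pos hlam ha ⟨hab, ht⟩)⟩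

end DNPsol

open Classical in
theorem stmt17_general {V : Type*} [Fintype V] (E : V → V → Prop) (w : V → V → ℝ)
    (isMax : V → Prop)
    (x : V → ℝ)
    (hmax : ∀ a b, E a b → isMax a → w a b + x b ≤ x a)
    (hmin : ∀ a b, E a b → ¬isMax a → x a ≤ w a b + x b)
    (δ : V → ℝ)
    (hδ : DNPsol (fun a b => E a b ∧ x a = w a b + x b) isMax (1 / 2) δ) :
    (∀ a b, E a b → x a = w a b + x b →
      (isMax a → (if 0 < δ b then (1 : ℝ) else 0) ≤ (if 0 < δ a then 1 else 0)) ∧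
      (¬isMax a → (if 0 < δ a then (1 : ℝ) else 0) ≤ (if 0 < δ b then 1 else 0))) ∧
    ∃ ε₀ : ℝ, 0 < ε₀ ∧ ∀ ε : ℝ, 0 < ε → ε ≤ ε₀ →
      (∀ a b, E a b → isMax a →
        w a b + (x b + ε * (if 0 < δ b then 1 else 0)) ≤
          x a + ε * (if 0 < δ a then 1 else 0)) ∧
      (∀ a b, E a b → ¬isMax a →
        x a + ε * (if 0 < δ a then 1 else 0) ≤
          w a b + (x b + ε * (if 0 < δ b then 1 else 0))) := by
  have hshift := hδ.isFeasibleShift_ite_pos one_half_pos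
  exact ⟨hshift, IsPotential.exists_add_mul ⟨hmax, hmin⟩ hshift⟩

open Classical in
/-- Lemma (feasible shift for energy games). Let `x` lie in the polyhedron of
potentials of a finite bipartite energy game with no zero cycles, let `δ` be
the DNP-game solution (discount `1/2`) on the graph of edges tight for `x`,
and let `χ⁺` be the characteristic vector of `{a | δ a > 0}`. Then `χ⁺`
respects all tight edges, and consequently `x + ε·χ⁺` lies in the polyhedron
of potentials for all sufficiently small `ε > 0`. -/
theorem stmt17 {V : Type*} [Fintype V] (E : V → V → Prop) (w : V → V → ℝ)
    (isMax : V → Prop)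
    (hbip : ∀ a b, E a b → (isMax a ↔ ¬isMax b))
    (hnozero : ∀ (c : ℕ → V) (l : ℕ), 1 ≤ l →
      (∀ i, i < l → E (c i) (c (i + 1))) → c l = c 0 →
      ∑ i ∈ Finset.range l, w (c i) (c (i + 1)) ≠ 0)
    (x : V → ℝ)
    (hmax : ∀ a b, E a b → isMax a → w a b + x b ≤ x a)
    (hmin : ∀ a b, E a b → ¬isMax a → x a ≤ w a b + x b)
    (δ : V → ℝ)
    (hδ : DNPsol (fun a b => E a b ∧ x a = w a b + x b) isMax (1 / 2) δ) :
    (∀ a b, E a b → x a = w a b + x b →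
      (isMax a → (if 0 < δ b then (1 : ℝ) else 0) ≤ (if 0 < δ a then 1 else 0)) ∧
      (¬isMax a → (if 0 < δ a then (1 : ℝ) else 0) ≤ (if 0 < δ b then 1 else 0))) ∧
    ∃ ε₀ : ℝ, 0 < ε₀ ∧ ∀ ε : ℝ, 0 < ε → ε ≤ ε₀ →
      (∀ a b, E a b → isMax a →
        w a b + (x b + ε * (if 0 < δ b then 1 else 0)) ≤
          x a + ε * (if 0 < δ a then 1 else 0)) ∧
      (∀ a b, E a b → ¬isMax a →
        x a + ε * (if 0 < δ a then 1 else 0) ≤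
          w a b + (x b + ε * (if 0 < δ b then 1 else 0))) :=
  stmt17_general E w isMax x hmax hmin δ hδ
end

section
/- Let G = (V,E) be a finite directed graph in which every node has an outgoing edge, with weight function w, and let σ be a Max positional strategy and τ a Min positional strategy. If some node v is winning for Max (via some strategy, all cycles reachable from v in G^σ are non-negative) and also winning for Min (via some strategy, all cycles reachable from v in G_τ are negative), then there is a contradiction; i.e., no node can be simultaneously winning for both players in an energy game. -/
/-!
Let `f` play `σ` at Max nodes and `τ` at Min nodes. Its graph lies in both `G^σ` and `G_τ`, and
on a finite set of nodes the orbit of `v` under `f` runs into a cycle. That cycle is reachable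
from `v` in both graphs, so its weight would have to be both non-negative and negative.
-/

open Function

theorem Function.exists_isPeriodicPt_iterate {V : Type*} [Finite V] (f : V → V) (v : V) :
    ∃ i l, 0 < l ∧ IsPeriodicPt f l (f^[i] v) := by
  obtain ⟨i, j, hne, heq⟩ := Finite.exists_ne_map_eq_of_infinite (fun n : ℕ => f^[n] v)
  wlog hij : i < j generalizing i j
  · exact this j i hne.symm heq.symm (by omega)
  refine ⟨i, j - i, by omega, ?_⟩
  change f^[j - i] (f^[i] v) = f^[i] v
  rw [← iterate_add_apply, Nat.sub_add_cancel hij.le]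
  exact heq.symm

theorem Relation.reflTransGen_iterate {V : Type*} {R : V → V → Prop} {f : V → V}
    (hR : ∀ a, R a (f a)) (n : ℕ) (a : V) : Relation.ReflTransGen R a (f^[n] a) := by
  induction n with
  | zero => exact .refl
  | succ n ih => rw [iterate_succ_apply']; exact ih.tail (hR _)

theorem Function.exists_reachable_cycle {V : Type*} [Finite V] (f : V → V) (v : V) :
    ∃ (c : ℕ → V) (l : ℕ), 1 ≤ l ∧ c l = c 0 ∧
      ∀ R : V → V → Prop, (∀ a, R a (f a)) →
        Relation.ReflTransGen R v (c 0) ∧ ∀ k, R (c k) (c (k + 1)) := by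
  obtain ⟨i, l, hl, hper⟩ := exists_isPeriodicPt_iterate f v
  refine ⟨fun n => f^[n] (f^[i] v), l, hl, hper, fun R hR => ⟨?_, fun k => ?_⟩⟩
  · exact Relation.reflTransGen_iterate hR i v
  · show R (f^[k] _) (f^[k + 1] _)
    rw [iterate_succ_apply']
    exact hR _

theorem stmt18_general {V : Type*} [Fintype V] (E : V → V → Prop) (w : V → V → ℝ)
    (isMax : V → Prop)
    (σ : V → V) (hσ : ∀ a, isMax a → E a (σ a))
    (τ : V → V) (hτ : ∀ a, ¬isMax a → E a (τ a))
    (v : V)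
    (hMaxWin : ∀ (c : ℕ → V) (l : ℕ), 1 ≤ l →
      Relation.ReflTransGen (fun a b => E a b ∧ (isMax a → b = σ a)) v (c 0) →
      (∀ i, i < l → E (c i) (c (i + 1)) ∧ (isMax (c i) → c (i + 1) = σ (c i))) →
      c l = c 0 →
      0 ≤ ∑ i ∈ Finset.range l, w (c i) (c (i + 1)))
    (hMinWin : ∀ (c : ℕ → V) (l : ℕ), 1 ≤ l →
      Relation.ReflTransGen (fun a b => E a b ∧ (¬isMax a → b = τ a)) v (c 0) →
      (∀ i, i < l → E (c i) (c (i + 1)) ∧ (¬isMax (c i) → c (i + 1) = τ (c i))) →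
      c l = c 0 →
      ∑ i ∈ Finset.range l, w (c i) (c (i + 1)) < 0) :
    False := by
  classical
  let f : V → V := fun a => if isMax a then σ a else τ a
  have hfσ : ∀ a, E a (f a) ∧ (isMax a → f a = σ a) := fun a => by
    by_cases h : isMax a <;> simp [f, h, hσ a, hτ a]
  have hfτ : ∀ a, E a (f a) ∧ (¬isMax a → f a = τ a) := fun a => by
    by_cases h : isMax a <;> simp [f, h, hσ a, hτ a]
  obtain ⟨c, l, hl, hcyc, hcycle⟩ := exists_reachable_cycle f v
  obtain ⟨hreachσ, hstepσ⟩ := hcycle (fun a b => E a b ∧ (isMax a → b = σ a)) hfσ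
  obtain ⟨hreachτ, hstepτ⟩ := hcycle (fun a b => E a b ∧ (¬isMax a → b = τ a)) hfτ
  linarith [hMaxWin c l hl hreachσ (fun k _ => hstepσ k) hcyc,
    hMinWin c l hl hreachτ (fun k _ => hstepτ k) hcyc]

/-- No node of an energy game can be winning for both players. Let every node
have an outgoing edge, let `σ` be a Max positional strategy and `τ` a Min
positional strategy (given as successor choices along edges). If from `v`
every cycle reachable in `G^σ` (edges consistent with `σ`) has non-negative
weight, while every cycle reachable in `G_τ` (edges consistent with `τ`) has
negative weight, we get a contradiction. -/
theorem stmt18 {V : Type*} [Fintype V] (E : V → V → Prop) (w : V → V → ℝ)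
    (isMax : V → Prop)
    (hout : ∀ a : V, ∃ b, E a b)
    (σ : V → V) (hσ : ∀ a, isMax a → E a (σ a))
    (τ : V → V) (hτ : ∀ a, ¬isMax a → E a (τ a))
    (v : V)
    (hMaxWin : ∀ (c : ℕ → V) (l : ℕ), 1 ≤ l →
      Relation.ReflTransGen (fun a b => E a b ∧ (isMax a → b = σ a)) v (c 0) →
      (∀ i, i < l → E (c i) (c (i + 1)) ∧ (isMax (c i) → c (i + 1) = σ (c i))) →
      c l = c 0 →
      0 ≤ ∑ i ∈ Finset.range l, w (c i) (c (i + 1)))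
    (hMinWin : ∀ (c : ℕ → V) (l : ℕ), 1 ≤ l →
      Relation.ReflTransGen (fun a b => E a b ∧ (¬isMax a → b = τ a)) v (c 0) →
      (∀ i, i < l → E (c i) (c (i + 1)) ∧ (¬isMax (c i) → c (i + 1) = τ (c i))) →
      c l = c 0 →
      ∑ i ∈ Finset.range l, w (c i) (c (i + 1)) < 0) :
    False :=
  stmt18_general E w isMax σ hσ τ hτ v hMaxWin hMinWin
end
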